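/- arXiv:1104.0755 — 3 statements merged into one kernel-verified Lean document; each statement's English description precedes it below -/
import Mathlib

section
/- Let q ∈ ℂ with 0 < |q| < 1. The Ramanujan function u(x) = A_q(x) satisfies the second-order q-difference equation q·x·u(q²x) − u(qx) + u(x) = 0 for all x ∈ ℂ. -/
open scoped BigOperators

/-- The finite q-Pochhammer symbol `(a;q)_n`. -/
noncomputable def qPoch (q a : ℂ) (n : ℕ) : ℂ := ∏ j ∈ Finset.range n, (1 - a * q ^ j)

/-- The Ramanujan function `A_q(x)`. -/
noncomputable def ramanujanA (q x : ℂ) : ℂ := ∑' n : ℕ, q ^ (n ^ 2) * (-x) ^ n / qPoch q q n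

/-!
Write `a_n(x) = q^{n²} (-x)^n / (q;q)_n` for the terms of `A_q(x)`. Since
`(-qx)^{n+1} = q^{n+1} (-x)^{n+1}` and `(q;q)_{n+1} = (q;q)_n (1 - q^{n+1})`, the factor
`1 - q^{n+1}` cancels in `a_{n+1}(x) - a_{n+1}(qx) = -qx · a_n(q²x)`, while
`a_0(x) - a_0(qx) = 0`. Summing over `n` gives `A_q(x) - A_q(qx) = -qx · A_q(q²x)`. The same
identity shows that the ratio of consecutive terms is `-x q^{2n+1} / (1 - q^{n+1}) → 0`, so
all three series converge.
-/

open Filter Topology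

theorem summable_of_norm_succ_le_mul_of_tendsto_zero {E : Type*} [SeminormedAddCommGroup E]
    [CompleteSpace E] {f : ℕ → E} {r : ℕ → ℝ} (hr : Tendsto r atTop (𝓝 0))
    (hf : ∀ n, ‖f (n + 1)‖ ≤ r n * ‖f n‖) : Summable f := by
  refine summable_of_ratio_norm_eventually_le (r := 1 / 2) (by norm_num) ?_
  filter_upwards [hr.eventually_le_const (by norm_num : (0 : ℝ) < 1 / 2)] with n hn
  exact (hf n).trans (mul_le_mul_of_nonneg_right hn (norm_nonneg _))

theorem pow_ne_one_of_norm_lt_one {𝕜 : Type*} [NormedDivisionRing 𝕜] {q : 𝕜}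
    (hq : ‖q‖ < 1) {n : ℕ} (hn : n ≠ 0) : q ^ n ≠ 1 := by
  intro h
  have := congrArg norm h
  rw [norm_pow, norm_one] at this
  exact (pow_lt_one₀ (norm_nonneg q) hq hn).ne this

theorem qPoch_succ (q a : ℂ) (n : ℕ) : qPoch q a (n + 1) = qPoch q a n * (1 - a * q ^ n) :=
  Finset.prod_range_succ _ n

namespace Ramanujan

noncomputable def term (q x : ℂ) (n : ℕ) : ℂ := q ^ (n ^ 2) * (-x) ^ n / qPoch q q n

theorem ramanujanA_eq_tsum_term (q x : ℂ) : ramanujanA q x = ∑' n, term q x n := rfl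

theorem term_zero (q x : ℂ) : term q x 0 = 1 := by
  simp [term, qPoch]

theorem term_mul (q c x : ℂ) (n : ℕ) : term q (c * x) n = c ^ n * term q x n := by
  rw [term, term, neg_mul_eq_mul_neg, mul_pow]
  ring

theorem term_succ_mul {q : ℂ} (x : ℂ) {n : ℕ} (hq : q ^ (n + 1) ≠ 1) :
    term q x (n + 1) * (1 - q ^ (n + 1)) = -(q * x) * term q (q ^ 2 * x) n := by
  have hf : 1 - q ^ (n + 1) ≠ 0 := sub_ne_zero.2 hq.symm
  rw [term, qPoch_succ, ← pow_succ', ← div_div, div_mul_cancel₀ _ hf, term_mul, term,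
    mul_div_assoc', mul_div_assoc']
  congr 1
  ring

theorem term_succ {q : ℂ} (x : ℂ) {n : ℕ} (hq : q ^ (n + 1) ≠ 1) :
    term q x (n + 1) = -x * q ^ (2 * n + 1) / (1 - q ^ (n + 1)) * term q x n := by
  have hf : 1 - q ^ (n + 1) ≠ 0 := sub_ne_zero.2 hq.symm
  rw [eq_comm, div_mul_eq_mul_div, div_eq_iff hf, term_succ_mul x hq, term_mul]
  ring

theorem term_sub_term_mul_succ {q : ℂ} (x : ℂ) {n : ℕ} (hq : q ^ (n + 1) ≠ 1) :
    term q x (n + 1) - term q (q * x) (n + 1) = -(q * x) * term q (q ^ 2 * x) n := by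
  rw [← term_succ_mul x hq, term_mul]
  ring

theorem summable_term {q : ℂ} (hq : ‖q‖ < 1) (x : ℂ) : Summable (term q x) := by
  have hratio :
      Tendsto (fun n : ℕ => -x * q ^ (2 * n + 1) / (1 - q ^ (n + 1))) atTop (𝓝 0) := by
    have hpow := tendsto_pow_atTop_nhds_zero_of_norm_lt_one hq
    have hodd : Tendsto (fun n : ℕ => 2 * n + 1) atTop atTop :=
      tendsto_atTop_mono (fun n => show n ≤ 2 * n + 1 by omega) tendsto_id
    have hnum := (hpow.comp hodd).const_mul (-x)
    have hden := (hpow.comp (tendsto_add_atTop_nat 1)).const_sub 1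
    simpa [Pi.div_def] using hnum.div hden (by simp)
  refine summable_of_norm_succ_le_mul_of_tendsto_zero
    (by simpa only [norm_zero] using hratio.norm) fun n => ?_
  rw [term_succ x (pow_ne_one_of_norm_lt_one hq n.succ_ne_zero), norm_mul]

theorem ramanujanA_sub_ramanujanA_mul {q : ℂ} (hq : ‖q‖ < 1) (x : ℂ) :
    ramanujanA q x - ramanujanA q (q * x) = -(q * x) * ramanujanA q (q ^ 2 * x) := by
  simp only [ramanujanA_eq_tsum_term]
  have hdiff := (summable_term hq x).sub (summable_term hq (q * x))
  rw [← (summable_term hq x).tsum_sub (summable_term hq (q * x)), hdiff.tsum_eq_zero_add,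
    term_zero, term_zero, sub_self, zero_add, ← tsum_mul_left]
  exact tsum_congr fun n => term_sub_term_mul_succ x (pow_ne_one_of_norm_lt_one hq n.succ_ne_zero)

end Ramanujan

theorem ramanujan_qDifference_equation_general (q : ℂ)
    (hq1 : ‖q‖ < 1) (x : ℂ) :
    q * x * ramanujanA q (q ^ 2 * x) - ramanujanA q (q * x) + ramanujanA q x = 0 := by
  linear_combination Ramanujan.ramanujanA_sub_ramanujanA_mul hq1 x

theorem ramanujan_qDifference_equation (q : ℂ) (hq0 : 0 < ‖q‖)
    (hq1 : ‖q‖ < 1) (x : ℂ) :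
    q * x * ramanujanA q (q ^ 2 * x) - ramanujanA q (q * x) + ramanujanA q x = 0 :=
  ramanujan_qDifference_equation_general q hq1 x
end

section
/- Let q ∈ ℂ with 0 < |q| < 1. The q-Airy function u(x) = Ai_q(x) satisfies the second-order q-difference equation u(q²x) + x·u(qx) − u(x) = 0 for all x ∈ ℂ. -/
open scoped BigOperators

/-- The q-Airy function `Ai_q(x)`. -/
noncomputable def qAiry (q x : ℂ) : ℂ :=
  ∑' n : ℕ, (-1) ^ n * q ^ (n * (n - 1) / 2) * (-x) ^ n / (qPoch q (-q) n * qPoch q q n)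

/-!
Writing `Ai_q(x) = ∑ tₙ(x)`, the terms satisfy `tₙ₊₁(x) = tₙ(x) · qⁿx / (1 - q²⁽ⁿ⁺¹⁾)` and
`tₙ(cx) = cⁿ tₙ(x)`. Hence `tₙ₊₁(q²x) - tₙ₊₁(x) = (q²⁽ⁿ⁺¹⁾ - 1) tₙ₊₁(x) = -x tₙ(qx)`, and summing over
`n` (the series converges by the ratio test, the ratio `qⁿx / (1 - q²⁽ⁿ⁺¹⁾)` tending to `0`) gives
`Ai_q(q²x) - Ai_q(x) = -x Ai_q(qx)`.
-/

open Filter Topology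

theorem summable_of_succ_eq_mul_of_tendsto_zero {𝕜 E : Type*} [NormedDivisionRing 𝕜]
    [NormedAddCommGroup E] [CompleteSpace E] [Module 𝕜 E] [NormSMulClass 𝕜 E]
    {f : ℕ → E} {r : ℕ → 𝕜} (hf : ∀ n, f (n + 1) = r n • f n)
    (hr : Tendsto r atTop (𝓝 0)) : Summable f := by
  have hsmall : ∀ᶠ n in atTop, ‖r n‖ < 1 / 2 :=
    hr.norm.eventually_lt_const (by simp)
  refine summable_of_ratio_norm_eventually_le (r := 1 / 2) (by norm_num) ?_
  filter_upwards [hsmall] with n hn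
  rw [hf, norm_smul]
  exact mul_le_mul_of_nonneg_right hn.le (norm_nonneg _)

theorem Nat.succ_mul_self_div_two (n : ℕ) : (n + 1) * (n + 1 - 1) / 2 = n * (n - 1) / 2 + n := by
  rw [← Nat.choose_two_right, ← Nat.choose_two_right, Nat.choose_succ_succ', Nat.choose_one_right,
    add_comm]

theorem one_sub_mul_pow_ne_zero {a q : ℂ} (ha : ‖a‖ < 1) (hq : ‖q‖ ≤ 1) (n : ℕ) :
    1 - a * q ^ n ≠ 0 := by
  refine sub_ne_zero.mpr fun h => ?_
  have : ‖a * q ^ n‖ < 1 := by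
    rw [norm_mul, norm_pow]
    exact mul_lt_one_of_nonneg_of_lt_one_left (norm_nonneg a) ha (pow_le_one₀ (norm_nonneg q) hq)
  simp [← h] at this

theorem qPoch_ne_zero {a q : ℂ} (ha : ‖a‖ < 1) (hq : ‖q‖ ≤ 1) (n : ℕ) : qPoch q a n ≠ 0 :=
  Finset.prod_ne_zero_iff.mpr fun j _ => one_sub_mul_pow_ne_zero ha hq j

noncomputable def qAiryTerm (q x : ℂ) (n : ℕ) : ℂ :=
  (-1) ^ n * q ^ (n * (n - 1) / 2) * (-x) ^ n / (qPoch q (-q) n * qPoch q q n)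

section qAiryTerm

variable {q : ℂ}

theorem qAiryTerm_zero (q x : ℂ) : qAiryTerm q x 0 = 1 := by
  simp [qAiryTerm, qPoch]

theorem qAiryTerm_const_mul (q c x : ℂ) (n : ℕ) :
    qAiryTerm q (c * x) n = c ^ n * qAiryTerm q x n := by
  rw [qAiryTerm, qAiryTerm, show -(c * x) = c * -x by ring, mul_pow]
  ring

theorem qAiryTerm_succ (hq : ‖q‖ < 1) (x : ℂ) (n : ℕ) :
    qAiryTerm q x (n + 1) = q ^ n * x / (1 - q ^ (2 * (n + 1))) * qAiryTerm q x n := by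
  have hneg : ‖-q‖ < 1 := (norm_neg q).trans_lt hq
  have hplus := one_sub_mul_pow_ne_zero hneg hq.le n
  have hminus := one_sub_mul_pow_ne_zero hq hq.le n
  have hP := qPoch_ne_zero hneg hq.le n
  have hQ := qPoch_ne_zero hq hq.le n
  have hsq : 1 - q ^ (2 * (n + 1)) = (1 - -q * q ^ n) * (1 - q * q ^ n) := by ring
  rw [qAiryTerm, qAiryTerm, qPoch_succ, qPoch_succ, Nat.succ_mul_self_div_two, hsq]
  field_simp
  ring

theorem summable_qAiryTerm (hq : ‖q‖ < 1) (x : ℂ) : Summable (qAiryTerm q x) := by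
  refine summable_of_succ_eq_mul_of_tendsto_zero
    (fun n => (qAiryTerm_succ hq x n).trans (smul_eq_mul _ _).symm) ?_
  have hpow : Tendsto (fun n : ℕ => q ^ n) atTop (𝓝 0) :=
    tendsto_pow_atTop_nhds_zero_of_norm_lt_one hq
  have hden : Tendsto (fun n : ℕ => 1 - q ^ (2 * (n + 1))) atTop (𝓝 (1 - 0)) :=
    tendsto_const_nhds.sub <|
      hpow.comp (tendsto_atTop_mono (fun n => show n ≤ 2 * (n + 1) by omega) tendsto_id)
  have hratio := (hpow.mul_const x).div hden (by simp)
  rwa [zero_mul, zero_div] at hratio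

theorem qAiryTerm_sq_mul_sub_succ (hq : ‖q‖ < 1) (x : ℂ) (n : ℕ) :
    qAiryTerm q (q ^ 2 * x) (n + 1) - qAiryTerm q x (n + 1) = -(x * qAiryTerm q (q * x) n) := by
  have hne : 1 - q ^ (2 * (n + 1)) ≠ 0 := by
    rw [show 2 * (n + 1) = 2 * n + 1 + 1 by ring, pow_succ']
    exact one_sub_mul_pow_ne_zero hq hq.le (2 * n + 1)
  rw [qAiryTerm_const_mul, qAiryTerm_const_mul, qAiryTerm_succ hq, ← pow_mul]
  field_simp
  ring

end qAiryTerm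

theorem qAiry_qDifference_equation_general (q : ℂ)
    (hq1 : ‖q‖ < 1) (x : ℂ) :
    qAiry q (q ^ 2 * x) + x * qAiry q (q * x) - qAiry q x = 0 := by
  have hasSum (y : ℂ) : HasSum (qAiryTerm q y) (qAiry q y) := (summable_qAiryTerm hq1 y).hasSum
  have hshift : HasSum (fun n => qAiryTerm q (q ^ 2 * x) n - qAiryTerm q x n)
      (-(x * qAiry q (q * x))) := by
    refine (hasSum_nat_add_iff' 1).mp ?_
    simpa [qAiryTerm_sq_mul_sub_succ hq1, qAiryTerm_zero] using ((hasSum (q * x)).mul_left x).neg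
  have := ((hasSum _).sub (hasSum x)).unique hshift
  linear_combination this

theorem qAiry_qDifference_equation (q : ℂ) (hq0 : 0 < ‖q‖)
    (hq1 : ‖q‖ < 1) (x : ℂ) :
    qAiry q (q ^ 2 * x) + x * qAiry q (q * x) - qAiry q x = 0 :=
  qAiry_qDifference_equation_general q hq1 x
end

section
/- Let q ∈ ℂ with 0 < |q| < 1, and let f(t) = ∑_{n≥0} a_n t^n be a power series with coefficients a_n ∈ ℂ such that the q-Borel transform g(τ) = ∑_{n≥0} a_n q^{-n(n-1)/2} τ^n converges for all τ ∈ ℂ (in particular f is entire). Then for every r > 0 and every t ∈ ℂ, the q-Laplace transform of g recovers f: (1/(2πi)) ∮_{|τ|=r} g(τ) · θ_q(t/τ) · dτ/τ = f(t), where the integral is taken counterclockwise over the circle of radius r centered at the origin. -/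
open scoped BigOperators

/-- The Jacobi theta function `θ_q(x)`. -/
noncomputable def jTheta (q x : ℂ) : ℂ := ∑' n : ℤ, q ^ (n * (n - 1) / 2) * x ^ n

/-!
On the circle `|τ| = r` both `g(τ) = ∑ cₙ τⁿ` (with `cₙ = aₙ q^{-n(n-1)/2}`) and
`θ_q(t/τ) = ∑ₘ q^{m(m-1)/2} tᵐ τ⁻ᵐ` converge absolutely: the first because a series summable in
`ℂ` is absolutely summable, the second because the ratio of consecutive terms is `qᵏ t/τ` for
`m = k ≥ 0` and `q^{k+1} τ/t` for `m = -k ≤ 0`, both tending to `0`. Their product divided by `τ`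
is a double series of monomials `τ^{n-m-1}` with a summable majorant, so it may be integrated
termwise, and only the terms `n = m` contribute `2πi`. On the diagonal the
`q`-powers of the Borel transform and of the theta function cancel, leaving `2πi ∑ aₙ tⁿ`.
-/

open Metric Filter Topology Complex Real Set

theorem summable_norm_of_succ_eq_mul {α : Type*} [SeminormedRing α] {u ρ : ℕ → α}
    (hu : ∀ k, u (k + 1) = ρ k * u k) (hρ : Tendsto ρ atTop (𝓝 0)) :
    Summable fun k => ‖u k‖ := by
  refine summable_of_ratio_norm_eventually_le (r := 1 / 2) (by norm_num) ?_
  filter_upwards [(tendsto_norm_zero.comp hρ).eventually_le_const (by norm_num : (0 : ℝ) < 1 / 2)]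
    with k hk
  calc ‖‖u (k + 1)‖‖ = ‖ρ k * u k‖ := by rw [norm_norm, hu]
    _ ≤ ‖ρ k‖ * ‖u k‖ := norm_mul_le _ _
    _ ≤ 1 / 2 * ‖‖u k‖‖ := by rw [norm_norm]; gcongr; exact hk

theorem Int.add_one_mul_add_one_sub_one_ediv_two (m : ℤ) :
    (m + 1) * (m + 1 - 1) / 2 = m * (m - 1) / 2 + m := by
  rw [show (m + 1) * (m + 1 - 1) = m * (m - 1) + m * 2 by ring,
    Int.add_mul_ediv_right _ _ two_ne_zero]

theorem Int.neg_add_one_mul_neg_add_one_sub_one_ediv_two (m : ℤ) :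
    -(m + 1) * (-(m + 1) - 1) / 2 = -m * (-m - 1) / 2 + (m + 1) := by
  rw [show -(m + 1) * (-(m + 1) - 1) = -m * (-m - 1) + (m + 1) * 2 by ring,
    Int.add_mul_ediv_right _ _ two_ne_zero]

theorem Nat.cast_mul_sub_one_div_two (n : ℕ) :
    ((n * (n - 1) / 2 : ℕ) : ℤ) = n * (n - 1 : ℤ) / 2 := by
  rcases n with _ | k
  · simp
  · push_cast [Int.natCast_div, Nat.succ_sub_one]
    ring_nf

theorem summable_norm_jTheta_term {q : ℂ} (hq0 : q ≠ 0) (hq1 : ‖q‖ < 1) (x : ℂ) :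
    Summable fun m : ℤ => ‖q ^ (m * (m - 1) / 2) * x ^ m‖ := by
  have hpow : Tendsto (fun k : ℕ => q ^ k) atTop (𝓝 0) :=
    tendsto_pow_atTop_nhds_zero_of_norm_lt_one hq1
  refine .of_nat_of_neg ?nonneg ?neg
  case nonneg =>
    refine summable_norm_of_succ_eq_mul (ρ := fun k => q ^ k * x) (fun k => ?_)
      (by simpa using hpow.mul_const x)
    rw [zpow_natCast x, zpow_natCast x, Nat.cast_succ, Int.add_one_mul_add_one_sub_one_ediv_two,
      zpow_add₀ hq0, zpow_natCast, pow_succ]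
    ring
  case neg =>
    refine summable_norm_of_succ_eq_mul (ρ := fun k => q ^ (k + 1) * x⁻¹) (fun k => ?_)
      (by simpa using ((tendsto_add_atTop_iff_nat 1).2 hpow).mul_const x⁻¹)
    rw [zpow_neg x, zpow_neg x, zpow_natCast, zpow_natCast, Nat.cast_succ,
      Int.neg_add_one_mul_neg_add_one_sub_one_ediv_two, zpow_add₀ hq0, zpow_add_one₀ hq0,
      zpow_natCast, pow_succ x, mul_inv]
    ring

theorem hasSum_circleIntegral_of_norm_le {E ι : Type*} [NormedAddCommGroup E] [NormedSpace ℂ E]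
    [CompleteSpace E] [Countable ι] {F : ι → ℂ → E} {c : ℂ} {R : ℝ} {M : ι → ℝ}
    (hF : ∀ i, ContinuousOn (F i) (sphere c |R|)) (hFM : ∀ i, ∀ z ∈ sphere c |R|, ‖F i z‖ ≤ M i)
    (hM : Summable M) :
    HasSum (fun i => ∮ z in C(c, R), F i z) (∮ z in C(c, R), ∑' i, F i z) := by
  refine intervalIntegral.hasSum_integral_of_dominated_convergence (fun i _ => |R| * M i)
    (fun i => ?meas) (fun i => .of_forall fun θ _ => ?bound)
    (.of_forall fun _ _ => hM.mul_left _) intervalIntegrable_const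
    (.of_forall fun θ _ => ?lim)
  case meas =>
    exact (((continuous_circleMap 0 R).mul continuous_const).smul ((hF i).comp_continuous
      (continuous_circleMap c R) (circleMap_mem_sphere' c R))).aestronglyMeasurable.congr
      (.of_forall fun θ => by simp only [deriv_circleMap]; rfl)
  case bound =>
    rw [norm_smul, deriv_circleMap, norm_mul, norm_circleMap_zero, norm_I, mul_one]
    exact mul_le_mul_of_nonneg_left (hFM i _ (circleMap_mem_sphere' c R θ)) (abs_nonneg R)
  case lim =>
    exact ((Summable.of_norm_bounded hM fun i =>
      hFM i _ (circleMap_mem_sphere' c R θ)).hasSum).const_smul _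

theorem circleIntegral_zpow (r : ℝ) (hr : r ≠ 0) (k : ℤ) :
    (∮ z in C(0, r), z ^ k) = if k = -1 then 2 * π * I else 0 := by
  split_ifs with hk
  · simpa [hk] using circleIntegral.integral_sub_center_inv 0 hr
  · simpa using circleIntegral.integral_sub_zpow_of_ne hk 0 0 r

theorem circleIntegral_tsum_mul_tsum_zpow_neg_div {r : ℝ} (hr : 0 < r) {c : ℕ → ℂ} {e : ℤ → ℂ}
    (hc : Summable fun n => ‖c n‖ * r ^ n) (he : Summable fun m : ℤ => ‖e m‖ * r ^ (-m)) :
    (∮ τ in C(0, r), (∑' n, c n * τ ^ n) * (∑' m : ℤ, e m * τ ^ (-m)) / τ) =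
      2 * π * I * ∑' n, c n * e n := by
  set F : ℕ × ℤ → ℂ → ℂ := fun p τ => c p.1 * e p.2 * τ ^ ((p.1 : ℤ) - p.2 - 1)
  have hsphere : ∀ τ ∈ sphere (0 : ℂ) r, ‖τ‖ = r ∧ τ ≠ 0 := fun τ hτ => by
    have hτr : ‖τ‖ = r := by simpa using hτ
    exact ⟨hτr, norm_pos_iff.1 (hτr ▸ hr)⟩
  have hexpand : EqOn (fun τ => (∑' n, c n * τ ^ n) * (∑' m : ℤ, e m * τ ^ (-m)) / τ)
      (fun τ => ∑' p, F p τ) (sphere 0 r) := fun τ hτ => by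
    obtain ⟨hτr, hτ0⟩ := hsphere τ hτ
    dsimp only
    rw [tsum_mul_tsum_of_summable_norm (by simpa [hτr] using hc) (by simpa [hτr] using he),
      ← tsum_div_const]
    refine tsum_congr fun p => ?_
    simp only [F, zpow_sub₀ hτ0, zpow_natCast, zpow_one, zpow_neg]
    ring
  have hsum : HasSum (fun p => ∮ τ in C(0, r), F p τ) (∮ τ in C(0, r), ∑' p, F p τ) := by
    refine hasSum_circleIntegral_of_norm_le (R := r)
      (M := fun p => ‖c p.1‖ * r ^ p.1 * (‖e p.2‖ * r ^ (-p.2)) * r⁻¹) (fun p τ hτ => ?_)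
      (fun p τ hτ => ?_) ((hc.mul_of_nonneg he (fun _ => by positivity)
        (fun _ => by positivity)).mul_right r⁻¹)
    all_goals rw [abs_of_pos hr] at hτ; obtain ⟨hτr, hτ0⟩ := hsphere τ hτ
    · exact continuousWithinAt_const.mul (continuousAt_zpow₀ τ _ (.inl hτ0)).continuousWithinAt
    · simp only [F, norm_mul, norm_zpow, hτr, zpow_sub₀ hr.ne', zpow_natCast, zpow_one, zpow_neg]
      exact le_of_eq (by ring)
  have hterm : ∀ p : ℕ × ℤ, (∮ τ in C(0, r), F p τ) =
      if p.2 = p.1 then 2 * π * I * (c p.1 * e p.2) else 0 := fun p => by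
    simp only [F, circleIntegral.integral_const_mul, circleIntegral_zpow r hr.ne']
    rw [if_congr (show (p.1 : ℤ) - p.2 - 1 = -1 ↔ p.2 = p.1 by omega) rfl rfl]
    split_ifs <;> ring
  have hdiag_inj : Function.Injective fun n : ℕ => ((n, n) : ℕ × ℤ) := fun _ _ h => by
    simpa using congrArg Prod.fst h
  have hsupp : (Function.support fun p => ∮ τ in C(0, r), F p τ) ⊆ Set.range fun n => (n, n) :=
    fun p hp => by
      rw [Function.mem_support, hterm, Ne, ite_eq_right_iff, Classical.not_imp] at hp
      exact ⟨p.1, Prod.ext rfl hp.1.symm⟩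
  rw [circleIntegral.integral_congr hr.le hexpand, ← hsum.tsum_eq, ← hdiag_inj.tsum_eq hsupp,
    ← tsum_mul_left]
  exact tsum_congr fun n => by rw [hterm, if_pos rfl]

/-- The q-Laplace transform inverts the q-Borel transform on entire functions. -/
theorem qLaplace_qBorel_eq_id (q : ℂ) (hq0 : 0 < ‖q‖) (hq1 : ‖q‖ < 1)
    (a : ℕ → ℂ)
    (hg : ∀ τ : ℂ, Summable fun n : ℕ => a n * q ^ (-(n * (n - 1) / 2 : ℕ) : ℤ) * τ ^ n)
    (r : ℝ) (hr : 0 < r) (t : ℂ) :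
    (1 / (2 * Real.pi * Complex.I)) *
        (∮ τ in C(0, r),
          (∑' n : ℕ, a n * q ^ (-(n * (n - 1) / 2 : ℕ) : ℤ) * τ ^ n) * jTheta q (t / τ) / τ) =
      ∑' n : ℕ, a n * t ^ n := by
  have hq : q ≠ 0 := norm_pos_iff.1 hq0
  have htheta : ∀ τ, jTheta q (t / τ) = ∑' m : ℤ, q ^ (m * (m - 1) / 2) * t ^ m * τ ^ (-m) :=
    fun τ => tsum_congr fun m => by rw [div_zpow, zpow_neg, div_eq_mul_inv, mul_assoc]
  have hBorel : Summable fun n => ‖a n * q ^ (-(n * (n - 1) / 2 : ℕ) : ℤ)‖ * r ^ n := by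
    simpa [abs_of_pos hr] using summable_norm_iff.2 (hg r)
  have hTheta : Summable fun m : ℤ => ‖q ^ (m * (m - 1) / 2) * t ^ m‖ * r ^ (-m) := by
    simpa [div_eq_mul_inv, mul_zpow, inv_zpow, abs_of_pos hr, mul_assoc] using
      summable_norm_jTheta_term hq hq1 (t / r)
  simp only [htheta]
  rw [circleIntegral_tsum_mul_tsum_zpow_neg_div hr hBorel hTheta, ← mul_assoc,
    one_div_mul_cancel two_pi_I_ne_zero, one_mul]
  refine tsum_congr fun n => ?_
  have hcancel : q ^ (-(n * (n - 1) / 2 : ℕ) : ℤ) * q ^ ((n : ℤ) * (n - 1) / 2) = 1 := by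
    rw [← Nat.cast_mul_sub_one_div_two, ← zpow_add₀ hq, neg_add_cancel, zpow_zero]
  rw [zpow_natCast]
  linear_combination (a n * t ^ n) * hcancel
end
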